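/- Let N ≥ 2 and K ≥ 1, and let (w, P) be a configuration with confidence e. Then the entropy impurity (conditional entropy) satisfies ∑_{k ∈ Fin K} w k · ∑_{i ∈ Fin N} (−P k i · log (P k i)) ≥ −log e, where log is the natural logarithm and 0·log 0 is interpreted as 0. (Specialization of the paper's Theorem 4 to the entropy impurity f(x) = −x log x, l(x) = −log x; this is the bound underlying the Boyd–Chiang remark.) -/

import Mathlib

/-!
Since `-log x` is decreasing, every `-log (P k i)` is at least `-log (max_i P k i)`; averaging
against `P k` itself shows that the entropy of `P k` is at least `-log (max_i P k i)`. Averaging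
over `k` with the weights `w` and using the concavity of `log` (Jensen) then gives `-log e`.
-/

open Finset

/-- The maximum of a real-valued vector over the finite index set `Fin N` (`N > 0`). -/
noncomputable def colMax {N : ℕ} (hN : 0 < N) (v : Fin N → ℝ) : ℝ :=
  Finset.univ.sup' (Finset.univ_nonempty_iff.mpr ⟨⟨0, hN⟩⟩) v

theorem neg_log_le_sum_negMulLog {ι : Type*} [Fintype ι] {p : ι → ℝ} {m : ℝ}
    (hp : ∀ i, 0 ≤ p i) (hps : ∑ i, p i = 1) (hpm : ∀ i, p i ≤ m) :
    -Real.log m ≤ ∑ i, Real.negMulLog (p i) := by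
  have hterm : ∀ i, p i * -Real.log m ≤ Real.negMulLog (p i) := by
    intro i
    rcases (hp i).eq_or_lt with hpi | hpi
    · simp [← hpi]
    · rw [Real.negMulLog, neg_mul, mul_neg, neg_le_neg_iff]
      exact mul_le_mul_of_nonneg_left (Real.log_le_log hpi (hpm i)) (hp i)
  calc -Real.log m = ∑ i, p i * -Real.log m := by rw [← sum_mul, hps, one_mul]
    _ ≤ ∑ i, Real.negMulLog (p i) := sum_le_sum fun i _ => hterm i

theorem sum_mul_log_le_log_sum_mul {ι : Type*} (s : Finset ι) {w x : ι → ℝ}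
    (hw : ∀ i ∈ s, 0 ≤ w i) (hws : ∑ i ∈ s, w i = 1) (hx : ∀ i ∈ s, 0 < x i) :
    ∑ i ∈ s, w i * Real.log (x i) ≤ Real.log (∑ i ∈ s, w i * x i) := by
  simpa only [smul_eq_mul] using strictConcaveOn_log_Ioi.concaveOn.le_map_sum hw hws hx

theorem le_colMax {N : ℕ} (hN : 0 < N) (v : Fin N → ℝ) (i : Fin N) : v i ≤ colMax hN v :=
  le_sup' v (mem_univ i)

theorem colMax_pos {N : ℕ} (hN : 0 < N) {v : Fin N → ℝ} (hv : 0 < ∑ i, v i) :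
    0 < colMax hN v := by
  obtain ⟨i, -, hi⟩ := exists_lt_of_sum_lt (s := univ) (f := 0) (g := v) (by simpa using hv)
  exact hi.trans_le (le_colMax hN v i)

theorem entropy_impurity_lower_bound (N K : ℕ) (hN : 2 ≤ N)
    (w : Fin K → ℝ) (hw : ∀ k, 0 ≤ w k) (hws : ∑ k, w k = 1)
    (P : Fin K → Fin N → ℝ) (hP : ∀ k i, 0 ≤ P k i) (hPs : ∀ k, ∑ i, P k i = 1)
    (e : ℝ) (he : e = ∑ k, w k * colMax (by omega) (P k)) :
    -Real.log e ≤ ∑ k, w k * ∑ i, Real.negMulLog (P k i) := by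
  set m : Fin K → ℝ := fun k => colMax (by omega) (P k)
  have hm_pos : ∀ k ∈ univ, 0 < m k := fun k _ => colMax_pos _ (by simp [hPs])
  have hentropy : ∀ k, -Real.log (m k) ≤ ∑ i, Real.negMulLog (P k i) := fun k =>
    neg_log_le_sum_negMulLog (hP k) (hPs k) (le_colMax _ (P k))
  have hjensen : ∑ k, w k * Real.log (m k) ≤ Real.log e :=
    he ▸ sum_mul_log_le_log_sum_mul univ (fun k _ => hw k) hws hm_pos
  calc -Real.log e ≤ ∑ k, w k * -Real.log (m k) := by
        simpa only [mul_neg, sum_neg_distrib, neg_le_neg_iff] using hjensen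
    _ ≤ ∑ k, w k * ∑ i, Real.negMulLog (P k i) :=
        sum_le_sum fun k _ => mul_le_mul_of_nonneg_left (hentropy k) (hw k)
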